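/- arXiv:1011.5229 — 5 statements merged into one kernel-verified Lean document; each statement's English description precedes it below -/
import Mathlib

section
/- Let n ≥ 2 and let τ be a Hermitian positive semidefinite 2^n × 2^n matrix, written in the computational basis as τ = Σ_{I,J} c_{IJ} |I⟩⟨J| over binary strings I, J of length n. Suppose that for every pair of distinct qubit positions k, ℓ and every real t with e^{2it} ≠ 1, τ is invariant under conjugation by the local operator that applies diag(e^{it},e^{-it}) at qubit k and diag(e^{-it},e^{it}) at qubit ℓ (identity elsewhere). Then c_{IJ} ≠ 0 implies J = I or J = I^c, where I^c is the bitwise complement of I. -/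
open Matrix Complex
open scoped ComplexOrder

noncomputable section

/-- Tensor (Kronecker) product of `n` local 2×2 operators, acting on `(ℂ²)^{⊗n}`
indexed by binary strings `Fin n → Fin 2`. -/
def tensorLocal {n : ℕ} (g : Fin n → Matrix (Fin 2) (Fin 2) ℂ) :
    Matrix (Fin n → Fin 2) (Fin n → Fin 2) ℂ :=
  Matrix.of fun I J => ∏ i, g i (I i) (J i)

/-- Unitary permuting the tensor factors of `(ℂ²)^{⊗n}`. -/
def permMatrix {n : ℕ} (π : Equiv.Perm (Fin n)) :
    Matrix (Fin n → Fin 2) (Fin n → Fin 2) ℂ :=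
  Matrix.of fun I J => if (∀ i, I i = J (π i)) then 1 else 0

/-- A state is symmetric if it is invariant under conjugation by all
tensor-factor permutations. -/
def SymmetricState {n : ℕ} (ρ : Matrix (Fin n → Fin 2) (Fin n → Fin 2) ℂ) : Prop :=
  ∀ π : Equiv.Perm (Fin n), permMatrix π * ρ * (permMatrix π)ᴴ = ρ

/-- Bit complement. -/
def flipBit : Fin 2 → Fin 2 := fun x => if x = 0 then 1 else 0

/-- `exp(-itZ/2) = diag(e^{-it/2}, e^{it/2})`. -/
def expZ (t : ℝ) : Matrix (Fin 2) (Fin 2) ℂ :=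
  Matrix.diagonal ![Complex.exp (-(Complex.I * t) / 2), Complex.exp (Complex.I * t / 2)]

/-- `diag(e^{it}, e^{-it})`. -/
def diagZ (t : ℝ) : Matrix (Fin 2) (Fin 2) ℂ :=
  Matrix.diagonal ![Complex.exp (Complex.I * t), Complex.exp (-(Complex.I * t))]

/-- Pauli X. -/
def X2 : Matrix (Fin 2) (Fin 2) ℂ := !![0, 1; 1, 0]

/-- Matrix unit `|I⟩⟨J|`. -/
def matUnit {n : ℕ} (I J : Fin n → Fin 2) :
    Matrix (Fin n → Fin 2) (Fin n → Fin 2) ℂ :=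
  Matrix.single I J 1

/-- Density matrix: positive semidefinite with trace 1. -/
def IsDensityMatrix {n : ℕ} (ρ : Matrix (Fin n → Fin 2) (Fin n → Fin 2) ℂ) : Prop :=
  ρ.PosSemidef ∧ ρ.trace = 1

/-- Projector `|ψ⟩⟨ψ|` of a (not necessarily normalized) state vector. -/
def projector {n : ℕ} (ψ : (Fin n → Fin 2) → ℂ) :
    Matrix (Fin n → Fin 2) (Fin n → Fin 2) ℂ :=
  Matrix.of fun I J => ψ I * (starRingEnd ℂ) (ψ J)

/-- The n-qubit GHZ state vector `(|0⋯0⟩+|1⋯1⟩)/√2`. -/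
def ghz (n : ℕ) : (Fin n → Fin 2) → ℂ := fun I =>
  if I = (fun _ => 0) then ((1 / Real.sqrt 2 : ℝ) : ℂ)
  else if I = (fun _ => 1) then ((1 / Real.sqrt 2 : ℝ) : ℂ) else 0

/-- The Dicke state `|D_n^{(k)}⟩`. -/
def dicke (n k : ℕ) : (Fin n → Fin 2) → ℂ := fun I =>
  if (∑ i, (I i : ℕ)) = k then ((1 / Real.sqrt (n.choose k) : ℝ) : ℂ) else 0

/-- The singlet state `(|01⟩ - |10⟩)/√2`. -/
def singlet : (Fin 2 → Fin 2) → ℂ := fun I =>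
  if I 0 = 0 ∧ I 1 = 1 then ((1 / Real.sqrt 2 : ℝ) : ℂ)
  else if I 0 = 1 ∧ I 1 = 0 then -((1 / Real.sqrt 2 : ℝ) : ℂ) else 0

/-- Unnormalized symmetrization of `n` one-qubit states. -/
def symmetrization {n : ℕ} (ψs : Fin n → (Fin 2 → ℂ)) : (Fin n → Fin 2) → ℂ :=
  fun I => ∑ π : Equiv.Perm (Fin n), ∏ i, ψs (π i) (I i)

/-- The 1-qubit reduced density matrix at position `j` (partial trace over the
other factors). -/
def reduced1 {n : ℕ} (ρ : Matrix (Fin n → Fin 2) (Fin n → Fin 2) ℂ) (j : Fin n) :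
    Matrix (Fin 2) (Fin 2) ℂ :=
  Matrix.of fun x y => ∑ I : Fin n → Fin 2,
    if I j = x then ρ I (Function.update I j y) else 0

/-!
At `t = π/2` the invariance operator for the pair `k, ℓ` is `diag(i,-i) ⊗ diag(-i,i) = Z_k Z_ℓ`,
which multiplies the entry `c_{IJ}` by `(-1)^{[I_k ≠ J_k] + [I_ℓ ≠ J_ℓ]}`. If `J` is neither `I`
nor `I^c`, choose `k` with `I_k ≠ J_k` and `ℓ` with `I_ℓ = J_ℓ`: the sign is `-1`, so `c_{IJ} = 0`.
-/

lemma diagonal_mul_mul_conjTranspose_diagonal_apply {ι R : Type*} [Fintype ι] [DecidableEq ι]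
    [CommSemiring R] [StarRing R] (d : ι → R) (A : Matrix ι ι R) (i j : ι) :
    (diagonal d * A * (diagonal d)ᴴ) i j = d i * A i j * star (d j) := by
  simp [diagonal_conjTranspose, mul_diagonal, diagonal_mul]

lemma apply_eq_zero_of_diagonal_conj_eq {ι R : Type*} [Fintype ι] [DecidableEq ι]
    [Field R] [StarRing R] {d : ι → R} {A : Matrix ι ι R}
    (hA : diagonal d * A * (diagonal d)ᴴ = A) {i j : ι} (hd : d i * star (d j) ≠ 1) :
    A i j = 0 := by
  have h := congrFun (congrFun hA i) j
  rw [diagonal_mul_mul_conjTranspose_diagonal_apply] at h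
  by_contra hij
  exact hd (mul_right_cancel₀ hij (by linear_combination h))

lemma tensorLocal_diagonal {n : ℕ} (v : Fin n → Fin 2 → ℂ) :
    tensorLocal (fun i => diagonal (v i)) = diagonal fun K => ∏ i, v i (K i) := by
  ext I J
  by_cases hIJ : I = J
  · subst hIJ
    simp [tensorLocal]
  · obtain ⟨i, hi⟩ := Function.ne_iff.mp hIJ
    rw [diagonal_apply_ne _ hIJ]
    exact Finset.prod_eq_zero (Finset.mem_univ i) (diagonal_apply_ne _ hi)

lemma tensorLocal_two_site_diagonal {n : ℕ} {k ℓ : Fin n} (hkℓ : k ≠ ℓ) (u w : Fin 2 → ℂ) :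
    (tensorLocal fun i => if i = k then diagonal u else if i = ℓ then diagonal w else 1) =
      diagonal fun K => u (K k) * w (K ℓ) := by
  have hfactor : (fun i => if i = k then diagonal u else if i = ℓ then diagonal w else 1) =
      fun i => diagonal (if i = k then u else if i = ℓ then w else 1) := by
    ext1 i
    split_ifs <;> simp
  rw [hfactor, tensorLocal_diagonal]
  congr 1
  ext K
  rw [Fintype.prod_eq_mul k ℓ hkℓ (fun i hi => by simp [hi.1, hi.2])]
  simp [hkℓ.symm]

def zSign : Fin 2 → ℂ := ![1, -1]

lemma zSign_mul_star_zSign (x y : Fin 2) : zSign x * star (zSign y) = if x = y then 1 else -1 := by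
  fin_cases x <;> fin_cases y <;> simp [zSign]

lemma zSign_mul_zSign_mul_star_of_ne_of_eq {x x' y y' : Fin 2} (hx : x ≠ x') (hy : y = y') :
    zSign x * zSign y * star (zSign x' * zSign y') = -1 :=
  calc _ = (zSign x * star (zSign x')) * (zSign y * star (zSign y')) := by rw [star_mul']; ring
    _ = -1 := by rw [zSign_mul_star_zSign, zSign_mul_star_zSign, if_neg hx, if_pos hy]; ring

lemma diagZ_pi_div_two : diagZ (Real.pi / 2) = diagonal fun x => I * zSign x := by
  rw [diagZ]
  congr 1
  ext x
  fin_cases x <;> simp [zSign, mul_comm I, Complex.exp_neg]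

lemma diagZ_neg_pi_div_two : diagZ (-(Real.pi / 2)) = diagonal fun x => -I * zSign x := by
  rw [diagZ]
  congr 1
  ext x
  fin_cases x <;> simp [zSign, mul_comm I, Complex.exp_neg]

lemma tensorLocal_diagZ_pi_div_two {n : ℕ} {k ℓ : Fin n} (hkℓ : k ≠ ℓ) :
    (tensorLocal fun i =>
        if i = k then diagZ (Real.pi / 2) else if i = ℓ then diagZ (-(Real.pi / 2)) else 1) =
      diagonal fun K => zSign (K k) * zSign (K ℓ) := by
  rw [diagZ_pi_div_two, diagZ_neg_pi_div_two, tensorLocal_two_site_diagonal hkℓ]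
  congr 1
  ext K
  linear_combination -(zSign (K k) * zSign (K ℓ)) * I_sq

lemma eq_flipBit_of_ne {x y : Fin 2} (h : x ≠ y) : x = flipBit y := by
  revert x y; decide

lemma exists_apply_eq_of_ne_flipBit {n : ℕ} {I J : Fin n → Fin 2}
    (h : J ≠ fun i => flipBit (I i)) : ∃ ℓ, J ℓ = I ℓ := by
  by_contra! hne
  exact h (funext fun i => eq_flipBit_of_ne (hne i))

theorem invariance_forces_ghz_form_general {n : ℕ}
    (τ : Matrix (Fin n → Fin 2) (Fin n → Fin 2) ℂ)
    (hinv : ∀ k ℓ : Fin n, k ≠ ℓ → ∀ t : ℝ, Complex.exp (2 * Complex.I * t) ≠ 1 →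
      (tensorLocal fun i => if i = k then diagZ t else if i = ℓ then diagZ (-t) else 1) * τ *
        (tensorLocal fun i => if i = k then diagZ t else if i = ℓ then diagZ (-t) else 1)ᴴ = τ) :
    ∀ I J : Fin n → Fin 2, τ I J ≠ 0 → J = I ∨ J = fun i => flipBit (I i) := by
  intro I J hIJ
  by_contra! ⟨hI, hIc⟩
  obtain ⟨k, hk⟩ := Function.ne_iff.mp hI
  obtain ⟨ℓ, hℓ⟩ := exists_apply_eq_of_ne_flipBit hIc
  have hkℓ : k ≠ ℓ := by rintro rfl; exact hk hℓ
  have ht : Complex.exp (2 * Complex.I * (Real.pi / 2 : ℝ)) ≠ 1 := by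
    rw [show 2 * Complex.I * ((Real.pi / 2 : ℝ) : ℂ) = Real.pi * Complex.I by push_cast; ring,
      exp_pi_mul_I]
    norm_num
  have hZZ := hinv k ℓ hkℓ (Real.pi / 2) ht
  rw [tensorLocal_diagZ_pi_div_two hkℓ] at hZZ
  refine hIJ (apply_eq_zero_of_diagonal_conj_eq hZZ ?_)
  rw [zSign_mul_zSign_mul_star_of_ne_of_eq hk.symm hℓ.symm]
  norm_num

/-- If a Hermitian PSD `τ` is invariant under conjugation by
`diag(e^{it},e^{-it})` at qubit `k` and `diag(e^{-it},e^{it})` at qubit `ℓ`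
for all such nontrivial operators, then only coefficients `c_{IJ}` with
`J = I` or `J = I^c` can be nonzero. -/
theorem invariance_forces_ghz_form {n : ℕ} (hn : 2 ≤ n)
    (τ : Matrix (Fin n → Fin 2) (Fin n → Fin 2) ℂ) (hτ : τ.PosSemidef)
    (hinv : ∀ k ℓ : Fin n, k ≠ ℓ → ∀ t : ℝ, Complex.exp (2 * Complex.I * t) ≠ 1 →
      (tensorLocal fun i => if i = k then diagZ t else if i = ℓ then diagZ (-t) else 1) * τ *
        (tensorLocal fun i => if i = k then diagZ t else if i = ℓ then diagZ (-t) else 1)ᴴ = τ) :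
    ∀ I J : Fin n → Fin 2, τ I J ≠ 0 → J = I ∨ J = fun i => flipBit (I i) :=
  invariance_forces_ghz_form_general τ hinv
end
end

section
/- Let τ = a|0⋯0⟩⟨0⋯0| + b|0⋯0⟩⟨1⋯1| + b|1⋯1⟩⟨0⋯0| + (1−a)|1⋯1⟩⟨1⋯1| and τ' = a'|0⋯0⟩⟨0⋯0| + b'|0⋯0⟩⟨1⋯1| + b'|1⋯1⟩⟨0⋯0| + (1−a')|1⋯1⟩⟨1⋯1| be n-qubit density matrices with a, a', b, b' real and b, b' ≥ 0. If τ and τ' have equal 1-qubit reduced density matrices and equal multisets of eigenvalues, then b = b' and (a = a' or a = 1 − a'); moreover in the case a = 1 − a', conjugating τ' by X^{⊗n} (where X = !![0,1;1,0]) yields τ. -/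
/-!
Every one-qubit marginal of `τ` has `(0,0)` entry `a`, so equal marginals force `a = a'`.
Equal spectra give equal `tr τ² = a² + 2b² + (1 - a)²`, hence `b² = b'²` and `b = b'`.
Finally `X^{⊗n}` is the permutation matrix of the flip of every bit, so conjugating by it
exchanges `|0⋯0⟩` and `|1⋯1⟩`, i.e. the coefficients `a'` and `1 - a'`.
-/

open Matrix Complex
open scoped ComplexOrder

noncomputable section

namespace Matrix

variable {𝕜 n : Type*} [RCLike 𝕜] [Fintype n] [DecidableEq n]

theorem IsHermitian.trace_mul_self_eq_sum_sq_eigenvalues {A : Matrix n n 𝕜}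
    (hA : A.IsHermitian) : (A * A).trace = ∑ i, ((hA.eigenvalues i ^ 2 : ℝ) : 𝕜) := by
  conv_lhs => rw [hA.spectral_theorem, ← map_mul, Unitary.conjStarAlgAut_apply, trace_mul_cycle,
    Unitary.coe_star_mul_self, one_mul, diagonal_mul_diagonal, trace_diagonal]
  simp [sq]

theorem IsHermitian.trace_mul_self_eq_of_eigenvalues_eq {A B : Matrix n n 𝕜}
    (hA : A.IsHermitian) (hB : B.IsHermitian) (σ : Equiv.Perm n)
    (h : ∀ i, hA.eigenvalues i = hB.eigenvalues (σ i)) : (A * A).trace = (B * B).trace := by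
  simp only [hA.trace_mul_self_eq_sum_sq_eigenvalues, hB.trace_mul_self_eq_sum_sq_eigenvalues, h]
  exact Equiv.sum_comp σ fun i => ((hB.eigenvalues i ^ 2 : ℝ) : 𝕜)

theorem permMatrix_mul_mul_conjTranspose_permMatrix {R : Type*} [NonAssocSemiring R] [StarRing R]
    (σ : Equiv.Perm n) (M : Matrix n n R) :
    σ.permMatrix R * M * (σ.permMatrix R)ᴴ = M.submatrix σ σ := by
  rw [conjTranspose_permMatrix, PEquiv.toMatrix_toPEquiv_mul, PEquiv.mul_toMatrix_toPEquiv]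
  rfl

end Matrix

def flipAll (n : ℕ) : Equiv.Perm (Fin n → Fin 2) :=
  Equiv.piCongrRight fun _ => Equiv.swap 0 1

theorem tensorLocal_X2_eq_permMatrix (n : ℕ) :
    tensorLocal (fun _ : Fin n => X2) = (flipAll n).permMatrix ℂ := by
  have hX2 : ∀ x y : Fin 2, X2 x y = if Equiv.swap 0 1 x = y then 1 else 0 := by
    intro x y
    fin_cases x <;> fin_cases y <;> simp [X2]
  ext I J
  simp [tensorLocal, hX2, Finset.prod_boole, flipAll, PEquiv.toMatrix_apply, funext_iff]

def ghzForm (n : ℕ) (α β γ δ : ℂ) : Matrix (Fin n → Fin 2) (Fin n → Fin 2) ℂ :=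
  α • matUnit (fun _ => 0) (fun _ => 0) + β • matUnit (fun _ => 0) (fun _ => 1) +
    γ • matUnit (fun _ => 1) (fun _ => 0) + δ • matUnit (fun _ => 1) (fun _ => 1)

theorem reduced1_apply_self {n : ℕ} (ρ : Matrix (Fin n → Fin 2) (Fin n → Fin 2) ℂ) (j : Fin n)
    (x : Fin 2) : reduced1 ρ j x x = ∑ I with I j = x, ρ I I := by
  rw [Finset.sum_filter]
  refine Finset.sum_congr rfl fun I _ => ?_
  split_ifs with h
  · rw [← h, Function.update_eq_self]
  · rfl

section ghzForm

variable {n : ℕ} (α β γ δ : ℂ)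

theorem const_zero_ne_const_one [NeZero n] : (fun _ : Fin n => (0 : Fin 2)) ≠ fun _ => 1 :=
  fun h => zero_ne_one (congrFun h 0)

theorem ghzForm_submatrix_flipAll :
    (ghzForm n α β γ δ).submatrix (flipAll n) (flipAll n) = ghzForm n δ γ β α := by
  have h0 : (flipAll n).symm (fun _ => 0) = fun _ => 1 := rfl
  have h1 : (flipAll n).symm (fun _ => 1) = fun _ => 0 := rfl
  simp only [ghzForm, matUnit, submatrix_add, submatrix_smul, Pi.add_apply, Pi.smul_apply,
    submatrix_single_equiv, h0, h1]
  abel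

theorem trace_ghzForm [NeZero n] : (ghzForm n α β γ δ).trace = α + δ := by
  simp [ghzForm, matUnit, trace_single_eq_same, trace_single_eq_of_ne,
    const_zero_ne_const_one, const_zero_ne_const_one.symm]

theorem ghzForm_mul_ghzForm [NeZero n] (α' β' γ' δ' : ℂ) :
    ghzForm n α β γ δ * ghzForm n α' β' γ' δ' =
      ghzForm n (α * α' + β * γ') (α * β' + β * δ') (γ * α' + δ * γ') (γ * β' + δ * δ') := by
  have h01 := const_zero_ne_const_one (n := n)
  have h0 : ∀ I L : Fin n → Fin 2, single I (fun _ => 0) (1 : ℂ) * single (fun _ => 1) L 1 = 0 :=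
    fun I _ => single_mul_single_of_ne 1 I _ _ h01 1
  have h1 : ∀ I L : Fin n → Fin 2, single I (fun _ => 1) (1 : ℂ) * single (fun _ => 0) L 1 = 0 :=
    fun I _ => single_mul_single_of_ne 1 I _ _ h01.symm 1
  simp only [ghzForm, matUnit, add_mul, mul_add, smul_mul_smul, single_mul_single_same, h0, h1,
    mul_one]
  module

theorem reduced1_ghzForm_zero_zero (j : Fin n) : reduced1 (ghzForm n α β γ δ) j 0 0 = α := by
  have : NeZero n := NeZero.of_pos j.pos
  have h01 := const_zero_ne_const_one (n := n)
  rw [reduced1_apply_self, Finset.sum_eq_single (fun _ => 0)]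
  · simp [ghzForm, matUnit, h01.symm]
  · intro I hI hI0
    have hI1 : I ≠ fun _ => 1 := by
      rintro rfl
      simp at hI
    simp [ghzForm, matUnit, hI0.symm, hI1.symm]
  · simp

end ghzForm

/-- Two GHZ-like density matrices with equal 1-qubit reduced density matrices
and equal eigenvalue multisets satisfy `b = b'` and `a = a'` or `a = 1 - a'`;
in the latter case conjugation by `X^{⊗n}` converts one to the other. -/
theorem ghz_form_determined {n : ℕ} (hn : 1 ≤ n) (a a' b b' : ℝ)
    (hb : 0 ≤ b) (hb' : 0 ≤ b')
    (τ τ' : Matrix (Fin n → Fin 2) (Fin n → Fin 2) ℂ)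
    (hτ : τ = (a : ℂ) • matUnit (fun _ => 0) (fun _ => 0) +
      (b : ℂ) • matUnit (fun _ => 0) (fun _ => 1) +
      (b : ℂ) • matUnit (fun _ => 1) (fun _ => 0) +
      ((1 : ℂ) - (a : ℂ)) • matUnit (fun _ => 1) (fun _ => 1))
    (hτ' : τ' = (a' : ℂ) • matUnit (fun _ => 0) (fun _ => 0) +
      (b' : ℂ) • matUnit (fun _ => 0) (fun _ => 1) +
      (b' : ℂ) • matUnit (fun _ => 1) (fun _ => 0) +
      ((1 : ℂ) - (a' : ℂ)) • matUnit (fun _ => 1) (fun _ => 1))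
    (hd : IsDensityMatrix τ) (hd' : IsDensityMatrix τ')
    (hred : ∀ j : Fin n, reduced1 τ j = reduced1 τ' j)
    (heig : ∃ σ : Equiv.Perm (Fin n → Fin 2),
      ∀ i, hd.1.1.eigenvalues i = hd'.1.1.eigenvalues (σ i)) :
    b = b' ∧ (a = a' ∨ a = 1 - a') ∧
      (a = 1 - a' →
        (tensorLocal fun _ : Fin n => X2) * τ' * (tensorLocal fun _ : Fin n => X2)ᴴ = τ) := by
  have : NeZero n := NeZero.of_pos hn
  replace hτ : τ = ghzForm n a b b (1 - a) := hτ
  replace hτ' : τ' = ghzForm n a' b' b' (1 - a') := hτ'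
  have haa' : a = a' := by
    have h00 := congrFun (congrFun (hred 0) 0) 0
    rwa [hτ, hτ', reduced1_ghzForm_zero_zero, reduced1_ghzForm_zero_zero, ofReal_inj] at h00
  have hbb' : b = b' := by
    obtain ⟨σ, hσ⟩ := heig
    have htr := hd.1.1.trace_mul_self_eq_of_eigenvalues_eq hd'.1.1 σ hσ
    rw [hτ, hτ', ghzForm_mul_ghzForm, ghzForm_mul_ghzForm, trace_ghzForm, trace_ghzForm, ← haa']
      at htr
    have hsq : b ^ 2 = b' ^ 2 := by
      norm_cast at htr
      linarith
    exact (pow_left_inj₀ hb hb' two_ne_zero).mp hsq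
  refine ⟨hbb', Or.inl haa', fun hflip => ?_⟩
  rw [hτ, hτ', tensorLocal_X2_eq_permMatrix, permMatrix_mul_mul_conjTranspose_permMatrix,
    ghzForm_submatrix_flipAll, hflip, hbb']
  push_cast
  ring_nf
end
end

section
/- Let n ≥ 3, a, b ∈ ℂ nonzero with |a| ≠ |b|, and |ψ⟩ = a|0⋯0⟩ + b|1⋯1⟩ the generalized GHZ state. If U = g_1⊗⋯⊗g_n with each g_k ∈ U(2) satisfies U|ψ⟩ = λ|ψ⟩ for some unit-modulus λ, and each g_k is either diagonal or antidiagonal, then every g_k is diagonal. -/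
open Matrix Complex
open scoped ComplexOrder

noncomputable section

theorem Matrix.mulVec_ite_ite_apply {m n R : Type*} [Fintype n] [DecidableEq n]
    [NonUnitalNonAssocSemiring R] (M : Matrix m n R) {p q : n} (hpq : p ≠ q) (a b : R) (i : m) :
    (M *ᵥ fun j => if j = p then a else if j = q then b else 0) i = M i p * a + M i q * b := by
  rw [mulVec, dotProduct, Fintype.sum_eq_add p q hpq fun j hj => by simp [hj.1, hj.2],
    if_pos rfl, if_neg hpq.symm, if_pos rfl]

theorem Matrix.sum_norm_sq_apply_eq_one_of_mem_unitaryGroup {ι 𝕜 : Type*} [Fintype ι]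
    [DecidableEq ι] [RCLike 𝕜] {U : Matrix ι ι 𝕜} (hU : U ∈ unitaryGroup ι 𝕜) (j : ι) :
    ∑ i, ‖U i j‖ ^ 2 = (1 : ℝ) := by
  have hcol : (star U * U) j j = 1 := by rw [(mem_unitaryGroup_iff'.mp hU), one_apply_eq]
  simp only [mul_apply, star_apply, RCLike.star_def, RCLike.conj_mul] at hcol
  exact_mod_cast hcol

theorem Matrix.norm_apply_zero_one_eq_one_of_mem_unitaryGroup {𝕜 : Type*} [RCLike 𝕜]
    {U : Matrix (Fin 2) (Fin 2) 𝕜} (hU : U ∈ unitaryGroup (Fin 2) 𝕜) (h : U 1 1 = 0) :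
    ‖U 0 1‖ = 1 := by
  have hcol := sum_norm_sq_apply_eq_one_of_mem_unitaryGroup hU 1
  rw [Fin.sum_univ_two, h, norm_zero, zero_pow two_ne_zero, add_zero] at hcol
  exact (pow_eq_one_iff_of_nonneg (norm_nonneg _) two_ne_zero).mp hcol

theorem genGHZ_stabilizer_all_diagonal_general {n : ℕ}
    (a b : ℂ) (ha : a ≠ 0) (hab : ‖a‖ ≠ ‖b‖)
    (ψ : (Fin n → Fin 2) → ℂ)
    (hψ : ψ = fun I => if I = (fun _ => 0) then a else if I = (fun _ => 1) then b else 0)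
    (g : Fin n → Matrix (Fin 2) (Fin 2) ℂ)
    (hg : ∀ k, g k ∈ Matrix.unitaryGroup (Fin 2) ℂ)
    (hdoa : ∀ k, (g k 0 1 = 0 ∧ g k 1 0 = 0) ∨ (g k 0 0 = 0 ∧ g k 1 1 = 0))
    (lam : ℂ) (hlam : ‖lam‖ = 1)
    (hstab : (tensorLocal g).mulVec ψ = lam • ψ) :
    ∀ k, g k 0 1 = 0 ∧ g k 1 0 = 0 := by
  subst hψ
  intro k
  by_contra hk
  have hk_anti : g k 0 0 = 0 := ((hdoa k).resolve_left hk).1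
  have hzero_ne_one : (fun _ : Fin n => (0 : Fin 2)) ≠ fun _ => 1 := fun h => by
    simpa using congrFun h k
  -- the `|0⋯0⟩` coefficient of `Uψ = λψ`, whose `a`-term is killed by the antidiagonal `g k`
  have hcomp : (∏ i, g i 0 1) * b = lam * a := by
    have h := congrFun hstab fun _ => 0
    rw [mulVec_ite_ite_apply _ hzero_ne_one, Pi.smul_apply, if_pos rfl, smul_eq_mul] at h
    simp only [tensorLocal, of_apply] at h
    rwa [Finset.prod_eq_zero (Finset.mem_univ k) hk_anti, zero_mul, zero_add] at h
  by_cases hanti : ∀ l, g l 1 1 = 0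
  · have hnorm := congrArg norm hcomp
    simp only [norm_mul, norm_prod, hlam, one_mul, Finset.prod_congr rfl fun l _ =>
      norm_apply_zero_one_eq_one_of_mem_unitaryGroup (hg l) (hanti l), Finset.prod_const_one] at hnorm
    exact hab hnorm.symm
  · obtain ⟨l, hl⟩ := not_forall.mp hanti
    have hl_diag : g l 0 1 = 0 := ((hdoa l).resolve_right fun h => hl h.2).1
    rw [Finset.prod_eq_zero (Finset.mem_univ l) hl_diag, zero_mul] at hcomp
    have hlam_ne : lam ≠ 0 := norm_ne_zero_iff.mp (hlam ▸ one_ne_zero)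
    exact ha ((mul_eq_zero.mp hcomp.symm).resolve_left hlam_ne)

/-- For a generalized GHZ state with `|a| ≠ |b|`, a local unitary stabilizer
whose factors are all diagonal or antidiagonal must have all factors
diagonal. -/
theorem genGHZ_stabilizer_all_diagonal {n : ℕ} (hn : 3 ≤ n)
    (a b : ℂ) (ha : a ≠ 0) (hb : b ≠ 0) (hab : ‖a‖ ≠ ‖b‖)
    (ψ : (Fin n → Fin 2) → ℂ)
    (hψ : ψ = fun I => if I = (fun _ => 0) then a else if I = (fun _ => 1) then b else 0)
    (g : Fin n → Matrix (Fin 2) (Fin 2) ℂ)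
    (hg : ∀ k, g k ∈ Matrix.unitaryGroup (Fin 2) ℂ)
    (hdoa : ∀ k, (g k 0 1 = 0 ∧ g k 1 0 = 0) ∨ (g k 0 0 = 0 ∧ g k 1 1 = 0))
    (lam : ℂ) (hlam : ‖lam‖ = 1)
    (hstab : (tensorLocal g).mulVec ψ = lam • ψ) :
    ∀ k, g k 0 1 = 0 ∧ g k 1 0 = 0 :=
  genGHZ_stabilizer_all_diagonal_general a b ha hab ψ hψ g hg hdoa lam hlam hstab
end
end

section
/- Let n ≥ 2, 0 < k < n, and suppose U = g_1⊗⋯⊗g_n with each g_j a diagonal unitary g_j = λ_j diag(e^{it_j}, e^{-it_j}), satisfies U|D_n^{(k)}⟩⟨D_n^{(k)}|U† = |D_n^{(k)}⟩⟨D_n^{(k)}|. Then for every pair j, ℓ, t_j − t_ℓ is an integer multiple of π; consequently all g_j are projectively equal, i.e. g_j = μ_j g_1 for unit-modulus scalars μ_j. -/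
open Matrix Complex
open scoped ComplexOrder

noncomputable section

/-!
If a diagonal unitary `diag(d)` fixes `|ψ⟩⟨ψ|`, then `d I * conj (d J) = 1` for all `I, J` in the
support of `ψ`. For `j ≠ ℓ` take a weight-`k` string `x` with `x j = 0`, `x ℓ = 1`, and let `y` be
`x` with positions `j, ℓ` swapped; both lie in the support of the Dicke state. All local factors
have unimodular entries and `x`, `y` agree off `{j, ℓ}`, so `d x * conj (d y)` collapses to
`e^{2i t_j} e^{-2i t_ℓ}`, whence `t_j - t_ℓ ∈ πℤ`. Projective equality then follows from
`diagZ (t + mπ) = (-1)^m • diagZ t`.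
-/

open Finset ComplexConjugate
open scoped Real

lemma tensorLocal_eq_diagonal {n : ℕ} {g : Fin n → Matrix (Fin 2) (Fin 2) ℂ}
    (hg : ∀ i, (g i).IsDiag) :
    tensorLocal g = diagonal fun I => ∏ i, g i (I i) (I i) := by
  ext I J
  rcases eq_or_ne I J with rfl | hIJ
  · simp [tensorLocal]
  · obtain ⟨i, hi⟩ := Function.ne_iff.mp hIJ
    rw [diagonal_apply_ne _ hIJ]
    exact prod_eq_zero (mem_univ i) (hg i hi)

lemma mul_conj_eq_one_of_diagonal_stabilizes_projector {n : ℕ} {d ψ : (Fin n → Fin 2) → ℂ}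
    (h : diagonal d * projector ψ * (diagonal d)ᴴ = projector ψ) {I J : Fin n → Fin 2}
    (hI : ψ I ≠ 0) (hJ : ψ J ≠ 0) :
    d I * conj (d J) = 1 := by
  have hIJ := congrFun₂ h I J
  rw [diagonal_conjTranspose, mul_diagonal, diagonal_mul] at hIJ
  simp only [projector, of_apply, Pi.star_apply, RCLike.star_def] at hIJ
  have hψ : ψ I * conj (ψ J) ≠ 0 := mul_ne_zero hI (by simpa using hJ)
  exact mul_right_cancel₀ hψ (by linear_combination hIJ)

lemma dicke_ne_zero {n k : ℕ} (hkn : k ≤ n) {I : Fin n → Fin 2} (hI : ∑ i, (I i : ℕ) = k) :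
    dicke n k I ≠ 0 := by
  have : (0 : ℝ) < n.choose k := by exact_mod_cast Nat.choose_pos hkn
  simp only [dicke, if_pos hI]
  exact_mod_cast (by positivity : (0 : ℝ) < 1 / √(n.choose k)).ne'

lemma exists_weight_eq_apply_eq_zero_apply_eq_one {n k : ℕ} (hk0 : 0 < k) (hkn : k < n)
    {j ℓ : Fin n} (hjℓ : j ≠ ℓ) :
    ∃ I : Fin n → Fin 2, ∑ i, (I i : ℕ) = k ∧ I j = 0 ∧ I ℓ = 1 := by
  have hcard : k - 1 ≤ (univ \ {j, ℓ}).card := by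
    rw [card_sdiff_of_subset (subset_univ _), card_pair hjℓ, card_univ, Fintype.card_fin]
    omega
  obtain ⟨T, hT, hTk⟩ := exists_subset_card_eq hcard
  have hjT : j ∉ T := fun h => by simpa using hT h
  have hℓT : ℓ ∉ T := fun h => by simpa using hT h
  refine ⟨fun i => if i ∈ insert ℓ T then 1 else 0, ?_, by simp [hjℓ, hjT], by simp⟩
  simp only [apply_ite Fin.val, Fin.val_one, Fin.val_zero, sum_boole, Nat.cast_id,
    filter_mem_eq_inter, univ_inter, card_insert_of_notMem hℓT, hTk]
  omega

lemma prod_mul_conj_prod_comp_swap {n : ℕ} {u : Fin n → Fin 2 → ℂ} (hu : ∀ i x, ‖u i x‖ = 1)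
    (I : Fin n → Fin 2) {j ℓ : Fin n} (hjℓ : j ≠ ℓ) :
    (∏ i, u i (I i)) * conj (∏ i, u i (I (Equiv.swap j ℓ i))) =
      u j (I j) * conj (u j (I ℓ)) * (u ℓ (I ℓ) * conj (u ℓ (I j))) := by
  rw [map_prod, ← prod_mul_distrib, Fintype.prod_eq_mul j ℓ hjℓ]
  · simp
  · rintro i ⟨hij, hiℓ⟩
    rw [Equiv.swap_apply_of_ne_of_ne hij hiℓ, mul_conj', hu, Complex.ofReal_one, one_pow]

lemma isDiag_smul_diagZ (c : ℂ) (t : ℝ) : (c • diagZ t).IsDiag :=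
  (isDiag_diagonal _).smul c

lemma norm_smul_diagZ_apply {c : ℂ} (hc : ‖c‖ = 1) (t : ℝ) (x : Fin 2) :
    ‖(c • diagZ t) x x‖ = 1 := by
  fin_cases x <;> simp [diagZ, hc, Complex.norm_exp]

lemma smul_diagZ_apply_zero_mul_conj {c : ℂ} (hc : ‖c‖ = 1) (t : ℝ) :
    (c • diagZ t) 0 0 * conj ((c • diagZ t) 1 1) = exp (2 * t * I) := by
  have hcc : c * conj c = 1 := by rw [mul_conj', hc, Complex.ofReal_one, one_pow]
  simp only [diagZ, Matrix.smul_apply, diagonal_apply_eq, smul_eq_mul, map_mul, ← Complex.exp_conj,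
    map_neg, conj_I, conj_ofReal, Matrix.cons_val_zero, Matrix.cons_val_one]
  calc c * exp (I * t) * (conj c * exp (-(-I * t)))
      = c * conj c * exp (I * t + I * t) := by rw [Complex.exp_add]; ring_nf
    _ = exp (2 * t * I) := by rw [hcc, one_mul]; ring_nf

lemma exists_int_mul_pi_of_exp_two_mul_I_eq_one {s : ℝ} (h : exp (2 * s * I) = 1) :
    ∃ m : ℤ, s = m * π := by
  obtain ⟨m, hm⟩ := exp_eq_one_iff.mp h
  refine ⟨m, ?_⟩
  have : (2 * s : ℂ) = 2 * (m * π) := by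
    apply mul_right_cancel₀ I_ne_zero; linear_combination hm
  exact_mod_cast mul_left_cancel₀ two_ne_zero this

lemma diagZ_add_int_mul_pi (s : ℝ) (m : ℤ) :
    diagZ (s + m * π) = ((-1) ^ m : ℂ) • diagZ s := by
  have hm : exp (m * (π * I)) = (-1) ^ m := by rw [Complex.exp_int_mul, Complex.exp_pi_mul_I]
  have hm' : exp (-(m * (π * I))) = (-1) ^ m := by
    rw [Complex.exp_neg, hm, ← _root_.inv_zpow, inv_neg, inv_one]
  rw [diagZ, diagZ, ← diagonal_smul]
  congr 1
  ext x
  fin_cases x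
  · change exp (I * ↑(s + m * π)) = (-1) ^ m * exp (I * s)
    rw [← hm, ← Complex.exp_add]
    congr 1; push_cast; ring
  · change exp (-(I * ↑(s + m * π))) = (-1) ^ m * exp (-(I * s))
    rw [← hm', ← Complex.exp_add]
    congr 1; push_cast; ring

lemma exists_smul_diagZ_eq_smul_of_sub_eq_int_mul_pi {a b : ℂ} (ha : ‖a‖ = 1) (hb : ‖b‖ = 1)
    {s t : ℝ} {m : ℤ} (h : s - t = m * π) :
    ∃ μ : ℂ, ‖μ‖ = 1 ∧ a • diagZ s = μ • b • diagZ t := by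
  have hb0 : b ≠ 0 := norm_ne_zero_iff.mp (hb ▸ one_ne_zero)
  refine ⟨a * (-1) ^ m / b, by simp [ha, hb], ?_⟩
  rw [show s = t + m * π by linarith, diagZ_add_int_mul_pi, smul_smul, smul_smul,
    div_mul_cancel₀ _ hb0]

lemma exp_two_mul_sub_mul_I_eq_one_of_stabilizes_dicke {n k : ℕ} (hk0 : 0 < k) (hkn : k < n)
    {lam : Fin n → ℂ} (hlam : ∀ j, ‖lam j‖ = 1) {t : Fin n → ℝ}
    (hstab : tensorLocal (fun i => lam i • diagZ (t i)) * projector (dicke n k) *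
      (tensorLocal fun i => lam i • diagZ (t i))ᴴ = projector (dicke n k))
    {j ℓ : Fin n} (hjℓ : j ≠ ℓ) :
    exp (2 * ↑(t j - t ℓ) * I) = 1 := by
  obtain ⟨x, hxk, hxj, hxℓ⟩ := exists_weight_eq_apply_eq_zero_apply_eq_one hk0 hkn hjℓ
  have hyk : ∑ i, (x (Equiv.swap j ℓ i) : ℕ) = k :=
    (Equiv.sum_comp (Equiv.swap j ℓ) fun i => (x i : ℕ)).trans hxk
  rw [tensorLocal_eq_diagonal fun i => isDiag_smul_diagZ _ _] at hstab
  have h := mul_conj_eq_one_of_diagonal_stabilizes_projector hstab (dicke_ne_zero hkn.le hxk)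
    (dicke_ne_zero hkn.le hyk)
  have hℓ : (lam ℓ • diagZ (t ℓ)) 1 1 * conj ((lam ℓ • diagZ (t ℓ)) 0 0) =
      conj (exp (2 * t ℓ * I)) := by
    rw [← smul_diagZ_apply_zero_mul_conj (hlam ℓ), map_mul, conj_conj, mul_comm]
  rw [prod_mul_conj_prod_comp_swap (fun i => norm_smul_diagZ_apply (hlam i) (t i)) x hjℓ,
    hxj, hxℓ, smul_diagZ_apply_zero_mul_conj (hlam j), hℓ, ← Complex.exp_conj,
    ← Complex.exp_add] at h
  rw [← h]
  congr 1
  simp only [map_mul, map_ofNat, conj_ofReal, conj_I, Complex.ofReal_sub]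
  ring

/-- A diagonal local unitary stabilizing a Dicke projector with `0 < k < n`
has all phase differences integer multiples of `π`; hence all factors are
projectively equal. -/
theorem dicke_diagonal_stabilizer_phases {n k : ℕ}
    (hk0 : 0 < k) (hkn : k < n)
    (g : Fin n → Matrix (Fin 2) (Fin 2) ℂ) (lam : Fin n → ℂ) (t : Fin n → ℝ)
    (hlam : ∀ j, ‖lam j‖ = 1)
    (hgj : ∀ j, g j = lam j • diagZ (t j))
    (hstab : tensorLocal g * projector (dicke n k) * (tensorLocal g)ᴴ =
      projector (dicke n k)) :
    (∀ j ℓ : Fin n, ∃ m : ℤ, t j - t ℓ = m * Real.pi) ∧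
    (∀ j : Fin n, ∃ μ : ℂ, ‖μ‖ = 1 ∧ g j = μ • g ⟨0, by omega⟩) := by
  obtain rfl : g = fun i => lam i • diagZ (t i) := funext hgj
  have phases : ∀ j ℓ : Fin n, ∃ m : ℤ, t j - t ℓ = m * π := by
    intro j ℓ
    rcases eq_or_ne j ℓ with rfl | hjℓ
    · exact ⟨0, by simp⟩
    exact exists_int_mul_pi_of_exp_two_mul_I_eq_one
      (exp_two_mul_sub_mul_I_eq_one_of_stabilizes_dicke hk0 hkn hlam hstab hjℓ)
  refine ⟨phases, fun j => ?_⟩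
  obtain ⟨m, hm⟩ := phases j ⟨0, by omega⟩
  exact exists_smul_diagZ_eq_smul_of_sub_eq_int_mul_pi (hlam j) (hlam _) hm
end
end

section
/- Let h ∈ U(2) and suppose the rotation of the Bloch sphere (unit sphere in ℝ³) induced by h maps the set of vertices of a regular n-gon (n ≥ 3) inscribed in the equatorial plane {z = 0} into itself. Then, as a rotation of ℝ³, h is either a rotation about the z-axis or a rotation by π about an axis in the equatorial plane; correspondingly h is projectively equal to a diagonal or an antidiagonal 2×2 unitary. -/
open Matrix Complex
open scoped ComplexOrder

noncomputable section

/-- Pauli matrices and `v · σ`. -/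
def pauliX : Matrix (Fin 2) (Fin 2) ℂ := !![0, 1; 1, 0]
def pauliY : Matrix (Fin 2) (Fin 2) ℂ := !![0, -Complex.I; Complex.I, 0]
def pauliZ : Matrix (Fin 2) (Fin 2) ℂ := !![1, 0; 0, -1]

def dotSigma (v : Fin 3 → ℝ) : Matrix (Fin 2) (Fin 2) ℂ :=
  ((v 0 : ℂ) • pauliX) + ((v 1 : ℂ) • pauliY) + ((v 2 : ℂ) • pauliZ)

/-- Vertices of the regular n-gon inscribed in the equatorial plane. -/
def ngonVertex (n : ℕ) (j : Fin n) : Fin 3 → ℝ :=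
  ![Real.cos (2 * Real.pi * (j : ℝ) / (n : ℝ)),
    Real.sin (2 * Real.pi * (j : ℝ) / (n : ℝ)), 0]

/-! The rotation `R` fixes the equatorial plane setwise, because two linearly independent
vertices of the polygon (here `j = 0, 1`, which needs `n ≥ 3`) are sent into it. Being
orthogonal, `R` therefore maps the pole `e₃` to `±e₃`. As conjugation by `h` realises `R` on
`v · σ`, this gives `h σ_z h* = ±σ_z`: `h` commutes or anticommutes with `σ_z`, i.e. it is
diagonal or antidiagonal. -/

lemma ngonVertex_two (n : ℕ) (j : Fin n) : ngonVertex n j 2 = 0 := rfl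

lemma sin_two_pi_div_ne_zero {n : ℕ} (hn : 3 ≤ n) : Real.sin (2 * Real.pi / n) ≠ 0 := by
  have hn' : (3 : ℝ) ≤ n := by exact_mod_cast hn
  refine (Real.sin_pos_of_pos_of_lt_pi (by positivity) ?_).ne'
  rw [div_lt_iff₀ (by linarith)]
  nlinarith [Real.pi_pos]

lemma row_two_eq_zero_of_mapsTo_ngon {n : ℕ} (hn : 3 ≤ n) {R : Matrix (Fin 3) (Fin 3) ℝ}
    (hngon : ∀ j : Fin n, ∃ j' : Fin n, R *ᵥ ngonVertex n j = ngonVertex n j') :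
    R 2 0 = 0 ∧ R 2 1 = 0 := by
  have height (j : Fin n) : (R *ᵥ ngonVertex n j) 2 = 0 := by
    obtain ⟨j', hj'⟩ := hngon j
    rw [hj', ngonVertex_two]
  have h20 : R 2 0 = 0 := by
    simpa [mulVec, dotProduct, ngonVertex, Fin.sum_univ_three] using height ⟨0, by omega⟩
  refine ⟨h20, ?_⟩
  have h1 := height ⟨1, by omega⟩
  simp only [mulVec, dotProduct, ngonVertex, Fin.sum_univ_three, h20] at h1
  simpa [sin_two_pi_div_ne_zero hn] using h1

lemma mulVec_e3_eq_or_of_mem_orthogonalGroup {R : Matrix (Fin 3) (Fin 3) ℝ}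
    (hR : R ∈ orthogonalGroup (Fin 3) ℝ) (h20 : R 2 0 = 0) (h21 : R 2 1 = 0) :
    R *ᵥ ![0, 0, 1] = ![0, 0, 1] ∨ R *ᵥ ![0, 0, 1] = ![0, 0, -1] := by
  have hrow := congrFun (congrFun ((mem_orthogonalGroup_iff _ _).mp hR) 2) 2
  have hcol := congrFun (congrFun ((mem_orthogonalGroup_iff' _ _).mp hR) 2) 2
  simp only [mul_apply, transpose_apply, Fin.sum_univ_three, one_apply_eq, h20, h21] at hrow hcol
  have h02 : R 0 2 = 0 := by nlinarith [sq_nonneg (R 0 2), sq_nonneg (R 1 2)]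
  have h12 : R 1 2 = 0 := by nlinarith [sq_nonneg (R 0 2), sq_nonneg (R 1 2)]
  have hmv : R *ᵥ ![0, 0, 1] = ![0, 0, R 2 2] := by
    ext i
    fin_cases i <;> simp [mulVec, dotProduct, Fin.sum_univ_three, h02, h12]
  rw [hmv]
  rcases mul_self_eq_one_iff.mp (by linarith : R 2 2 * R 2 2 = 1) with h22 | h22 <;>
    simp [h22]

lemma dotSigma_e3 (c : ℝ) : dotSigma ![0, 0, c] = (c : ℂ) • pauliZ := by
  simp [dotSigma]

lemma mul_eq_mul_of_conj_eq {M : Type*} [Monoid M] [StarMul M] {u a b : M}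
    (hu : u ∈ unitary M) (h : u * a * star u = b) : u * a = b * u := by
  rw [← h, mul_assoc _ (star u), Unitary.star_mul_self_of_mem hu, mul_one]

lemma offDiag_eq_zero_of_commute_pauliZ {h : Matrix (Fin 2) (Fin 2) ℂ}
    (hc : h * pauliZ = pauliZ * h) : h 0 1 = 0 ∧ h 1 0 = 0 := by
  have e01 : -h 0 1 = h 0 1 := by
    simpa [mul_apply, Fin.sum_univ_two, pauliZ] using congrFun (congrFun hc 0) 1
  have e10 : h 1 0 = -h 1 0 := by
    simpa [mul_apply, Fin.sum_univ_two, pauliZ] using congrFun (congrFun hc 1) 0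
  exact ⟨by linear_combination (-1 / 2 : ℂ) * e01, by linear_combination (1 / 2 : ℂ) * e10⟩

lemma diag_eq_zero_of_anticommute_pauliZ {h : Matrix (Fin 2) (Fin 2) ℂ}
    (hc : h * pauliZ = -pauliZ * h) : h 0 0 = 0 ∧ h 1 1 = 0 := by
  have e00 : h 0 0 = -h 0 0 := by
    simpa [mul_apply, Fin.sum_univ_two, pauliZ] using congrFun (congrFun hc 0) 0
  have e11 : -h 1 1 = h 1 1 := by
    simpa [mul_apply, Fin.sum_univ_two, pauliZ] using congrFun (congrFun hc 1) 1
  exact ⟨by linear_combination (1 / 2 : ℂ) * e00, by linear_combination (-1 / 2 : ℂ) * e11⟩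

/-- If the Bloch-sphere rotation induced by `h ∈ U(2)` maps the vertex set of
a regular `n`-gon (`n ≥ 3`) in the equatorial plane into itself, then it is a
rotation about the z-axis (and `h` is diagonal up to phase) or a rotation by
`π` about an equatorial axis (and `h` is antidiagonal up to phase). -/
theorem ngon_symmetry_diag_or_antidiag {n : ℕ} (hn : 3 ≤ n)
    (h : Matrix (Fin 2) (Fin 2) ℂ) (hh : h ∈ Matrix.unitaryGroup (Fin 2) ℂ)
    (R : Matrix (Fin 3) (Fin 3) ℝ)
    (hR : R ∈ Matrix.specialOrthogonalGroup (Fin 3) ℝ)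
    (hcompat : ∀ v : Fin 3 → ℝ, h * dotSigma v * hᴴ = dotSigma (R.mulVec v))
    (hngon : ∀ j : Fin n, ∃ j' : Fin n, R.mulVec (ngonVertex n j) = ngonVertex n j') :
    (R.mulVec ![0, 0, 1] = ![0, 0, 1] ∧ h 0 1 = 0 ∧ h 1 0 = 0) ∨
    (R.mulVec ![0, 0, 1] = ![0, 0, -1] ∧ h 0 0 = 0 ∧ h 1 1 = 0) := by
  obtain ⟨h20, h21⟩ := row_two_eq_zero_of_mapsTo_ngon hn hngon
  have hZ := hcompat ![0, 0, 1]
  rw [← star_eq_conjTranspose] at hZ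
  rcases mulVec_e3_eq_or_of_mem_orthogonalGroup hR.1 h20 h21 with he | he
  · simp only [he, dotSigma_e3, Complex.ofReal_one, one_smul] at hZ
    exact .inl ⟨he, offDiag_eq_zero_of_commute_pauliZ (mul_eq_mul_of_conj_eq hh hZ)⟩
  · simp only [he, dotSigma_e3, Complex.ofReal_one, Complex.ofReal_neg, one_smul, neg_smul]
      at hZ
    exact .inr ⟨he, diag_eq_zero_of_anticommute_pauliZ
      (by rw [mul_eq_mul_of_conj_eq hh hZ, neg_mul])⟩
end
end
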